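/- arXiv:2310.10585 — 15 statements merged into one kernel-verified Lean document; each statement's English description precedes it below -/
import Mathlib

section
/- (Lemma 1, predicate case.) If the pointwise tolerance set T(x,t) is bounded above and the shift vector κ : Fin m → ℝ satisfies |κ k| < sSup (T(x,t)) for every agent k, then χ(x_κ, t) = χ(x, t); i.e., asynchronously shifting each agent's state in time by less than the ATR magnitude does not change the truth value of the predicate at time t. -/
open Set Classical

variable {E : Type*} [NormedAddCommGroup E] [NormedSpace ℝ E]

/-- The asynchronously time-shifted multi-agent signal: agent `k`'s state at time `t`
is the original state at time `t + κ k`. -/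
def shift {m : ℕ} (x : Fin m → ℝ → E) (κ : Fin m → ℝ) : Fin m → ℝ → E :=
  fun k t => x k (t + κ k)

/-- The characteristic function of the predicate `μ ≥ 0`: `1` if satisfied at `t`, `-1` else. -/
noncomputable def chi {m : ℕ} (μ : (Fin m → E) → ℝ) (x : Fin m → ℝ → E) (t : ℝ) : ℝ :=
  if 0 ≤ μ (fun k => x k t) then 1 else -1

/-- The pointwise tolerance set: nonnegative `τ` such that every asynchronous shift with
`|κ k| ≤ τ` preserves the truth value of the predicate at time `t`. -/
def Tol {m : ℕ} (μ : (Fin m → E) → ℝ) (x : Fin m → ℝ → E) (t : ℝ) : Set ℝ :=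
  {τ : ℝ | 0 ≤ τ ∧ ∀ κ : Fin m → ℝ, (∀ k, |κ k| ≤ τ) → chi μ (shift x κ) t = chi μ x t}

/-- The pointwise asynchronous temporal robustness (ATR) of the predicate at time `t`. -/
noncomputable def theta {m : ℕ} (μ : (Fin m → E) → ℝ) (x : Fin m → ℝ → E) (t : ℝ) : ℝ :=
  chi μ x t * sSup (Tol μ x t)

/-- Lemma 1, predicate case: shifting each agent by strictly less than the
supremum of the tolerance set preserves the truth value of the predicate at time `t`. -/
theorem atr_predicate_sound
    {m : ℕ} (hm : 1 ≤ m) (μ : (Fin m → E) → ℝ) (x : Fin m → ℝ → E) (t : ℝ)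
    (hbdd : BddAbove (Tol μ x t)) (κ : Fin m → ℝ)
    (hκ : ∀ k, |κ k| < sSup (Tol μ x t)) :
    chi μ (shift x κ) t = chi μ x t := by
  have k0 : Fin m := ⟨0, hm⟩
  have hne : (Tol μ x t).Nonempty := by
    by_contra h
    rw [Set.not_nonempty_iff_eq_empty] at h
    have := hκ k0
    rw [h, Real.sSup_empty] at this
    exact absurd this (not_lt.2 (abs_nonneg _))
  obtain ⟨τ0, hτ0⟩ := Finset.exists_max_image Finset.univ (fun k => |κ k|)
    ⟨k0, Finset.mem_univ k0⟩
  obtain ⟨_, hmax⟩ := hτ0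
  obtain ⟨τ, hτmem, hτgt⟩ := exists_lt_of_lt_csSup hne (hκ τ0)
  exact hτmem.2 κ (fun k => le_trans (hmax k (Finset.mem_univ k)) hτgt.le)
end

section
/- (Lemma 1, Always case.) Let I ⊆ ℝ be nonempty and assume that for every t ∈ I one has μ (fun k => x k t) ≥ 0 (so χ(x,t) = 1) and that T(x,t) is bounded above. Let c := sInf {θ̄(x,t) | t ∈ I} be the ATR of the formula Always_I p. Then for every shift vector κ : Fin m → ℝ with |κ k| < c for all k, and for every t ∈ I, the shifted signal satisfies the predicate: μ (fun k => x_κ k t) ≥ 0. -/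
open Set Classical

variable {E : Type*} [NormedAddCommGroup E] [NormedSpace ℝ E]

/-- Lemma 1, Always case: if the predicate holds throughout `I` and each
tolerance set is bounded above, then any asynchronous shift with magnitudes strictly less
than `c = sInf {θ̄(x,t) | t ∈ I}` keeps the predicate satisfied throughout `I`. -/
theorem atr_always_sound
    {m : ℕ} (hm : 1 ≤ m) (μ : (Fin m → E) → ℝ) (x : Fin m → ℝ → E) (I : Set ℝ)
    (hI : I.Nonempty)
    (hsat : ∀ t ∈ I, 0 ≤ μ (fun k => x k t))
    (hbdd : ∀ t ∈ I, BddAbove (Tol μ x t))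
    (κ : Fin m → ℝ)
    (hκ : ∀ k, |κ k| < sInf ((fun t => theta μ x t) '' I)) :
    ∀ t ∈ I, 0 ≤ μ (fun k => shift x κ k t) := by
  intro t ht
  haveI : NeZero m := ⟨by omega⟩
  have h0mem : ∀ s ∈ I, (0:ℝ) ∈ Tol μ x s := by
    intro s hs
    refine ⟨le_refl 0, fun κ' hκ' => ?_⟩
    have : κ' = 0 := funext fun k => abs_nonpos_iff.mp (hκ' k)
    subst this
    have : shift x 0 = x := by funext k u; simp [shift]
    rw [this]
  have htheta_eq : ∀ s ∈ I, theta μ x s = sSup (Tol μ x s) := by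
    intro s hs
    unfold theta chi
    rw [if_pos (hsat s hs), one_mul]
  have hc_le : sInf ((fun t => theta μ x t) '' I) ≤ theta μ x t := by
    apply csInf_le
    · refine ⟨0, fun y hy => ?_⟩
      obtain ⟨s, hs, rfl⟩ := hy
      show (0:ℝ) ≤ theta μ x s
      rw [htheta_eq s hs]
      exact le_csSup (hbdd s hs) (h0mem s hs)
    · exact ⟨t, ht, rfl⟩
  have hne : (Finset.univ : Finset (Fin m)).Nonempty := Finset.univ_nonempty
  set M := Finset.univ.sup' hne (fun k => |κ k|) with hM
  have hMlt : M < sSup (Tol μ x t) := by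
    obtain ⟨k0, _, hk0⟩ := Finset.exists_mem_eq_sup' hne (fun k => |κ k|)
    calc M = |κ k0| := hk0
    _ < sInf ((fun t => theta μ x t) '' I) := hκ k0
    _ ≤ theta μ x t := hc_le
    _ = sSup (Tol μ x t) := htheta_eq t ht
  obtain ⟨τ, hτmem, hτgt⟩ := exists_lt_of_lt_csSup ⟨0, h0mem t ht⟩ hMlt
  have hchi : chi μ (shift x κ) t = chi μ x t := by
    refine hτmem.2 κ fun k => ?_
    exact le_of_lt (lt_of_le_of_lt (Finset.le_sup' (fun k => |κ k|) (Finset.mem_univ k)) hτgt)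
  rw [show chi μ x t = 1 from if_pos (hsat t ht)] at hchi
  by_contra hneg
  rw [chi, if_neg hneg] at hchi
  norm_num at hchi
end

section
/- (Lemma 1, Eventually case.) Let I ⊆ ℝ be nonempty and assume that for every t ∈ I the set T(x,t) is bounded above, and that the set {θ̄(x,t) | t ∈ I} is bounded above. Let c := sSup {θ̄(x,t) | t ∈ I} be the ATR of the formula Eventually_I p, and assume c > 0. Then for every shift vector κ : Fin m → ℝ with |κ k| < c for all k, there exists t ∈ I such that the shifted signal satisfies the predicate: μ (fun k => x_κ k t) ≥ 0. -/
open Set Classical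

variable {E : Type*} [NormedAddCommGroup E] [NormedSpace ℝ E]

/-- Lemma 1, Eventually case: if `c = sSup {θ̄(x,t) | t ∈ I} > 0`, then any
asynchronous shift with magnitudes strictly less than `c` keeps the predicate satisfied at
some time in `I`. -/
theorem atr_eventually_sound
    {m : ℕ} (hm : 1 ≤ m) (μ : (Fin m → E) → ℝ) (x : Fin m → ℝ → E) (I : Set ℝ)
    (hI : I.Nonempty)
    (hbdd : ∀ t ∈ I, BddAbove (Tol μ x t))
    (hbdd' : BddAbove ((fun t => theta μ x t) '' I))
    (hc : 0 < sSup ((fun t => theta μ x t) '' I))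
    (κ : Fin m → ℝ)
    (hκ : ∀ k, |κ k| < sSup ((fun t => theta μ x t) '' I)) :
    ∃ t ∈ I, 0 ≤ μ (fun k => shift x κ k t) := by
  set c := sSup ((fun t => theta μ x t) '' I) with hcdef
  haveI : Nonempty (Fin m) := ⟨⟨0, hm⟩⟩
  -- τ0 = max of |κ k|
  obtain ⟨k0, hk0⟩ := Finite.exists_max (fun k => |κ k|)
  set τ0 := |κ k0| with hτ0
  have hτ0nn : 0 ≤ τ0 := abs_nonneg _
  have hτ0c : τ0 < c := hκ k0
  -- find t ∈ I with theta > τ0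
  obtain ⟨y, hy, hyτ⟩ := exists_lt_of_lt_csSup (hI.image _) hτ0c
  obtain ⟨t, htI, rfl⟩ := hy
  have hTol0 : (0 : ℝ) ∈ Tol μ x t := by
    refine ⟨le_refl 0, fun κ' hκ' => ?_⟩
    have : κ' = 0 := funext fun k => abs_nonpos_iff.mp (hκ' k)
    subst this
    unfold chi shift
    simp
  have hTolne : (Tol μ x t).Nonempty := ⟨0, hTol0⟩
  have hSupnn : 0 ≤ sSup (Tol μ x t) := le_csSup (hbdd t htI) hTol0
  have hchi : chi μ x t = 1 := by
    by_contra h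
    have : chi μ x t = -1 := by unfold chi at h ⊢; split at h <;> simp_all
    have : theta μ x t ≤ 0 := by
      unfold theta; rw [this]; nlinarith
    linarith
  have hSup : τ0 < sSup (Tol μ x t) := by
    have h := hyτ
    simp only [theta] at h
    rw [hchi, one_mul] at h
    exact h
  obtain ⟨τ, hτmem, hττ0⟩ := exists_lt_of_lt_csSup hTolne hSup
  have hchieq : chi μ (shift x κ) t = chi μ x t :=
    hτmem.2 κ (fun k => le_of_lt (lt_of_le_of_lt (hk0 k) hττ0))
  refine ⟨t, htI, ?_⟩
  rw [hchi] at hchieq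
  unfold chi at hchieq
  split at hchieq
  · assumption
  · norm_num at hchieq
end

section
/- (Lemma 1, conjunction case.) Fix times t₁, t₂ ∈ ℝ and assume T₁(x,t₁) and T₂(x,t₂) are both bounded above. Let c := min (sSup (T₁(x,t₁))) (sSup (T₂(x,t₂))). Then for every shift vector κ : Fin m → ℝ with |κ k| < c for all k, both truth values are preserved: χ₁(x_κ, t₁) = χ₁(x, t₁) and χ₂(x_κ, t₂) = χ₂(x, t₂). -/
open Set Classical

variable {E : Type*} [NormedAddCommGroup E] [NormedSpace ℝ E]

lemma tol_zero_mem {m : ℕ} (μ : (Fin m → E) → ℝ) (x : Fin m → ℝ → E) (t : ℝ) :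
    (0 : ℝ) ∈ Tol μ x t := by
  refine ⟨le_refl 0, fun κ hκ => ?_⟩
  have hκ0 : κ = 0 := by
    funext k
    have := hκ k
    have : |κ k| = 0 := le_antisymm this (abs_nonneg _)
    simpa [abs_eq_zero] using this
  subst hκ0
  simp [shift, chi]

lemma chi_shift_eq {m : ℕ} (hm : 1 ≤ m) (μ : (Fin m → E) → ℝ) (x : Fin m → ℝ → E) (t : ℝ)
    (κ : Fin m → ℝ) (hκ : ∀ k, |κ k| < sSup (Tol μ x t)) :
    chi μ (shift x κ) t = chi μ x t := by
  have hne : (Finset.univ : Finset (Fin m)).Nonempty := by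
    haveI : NeZero m := ⟨by omega⟩
    exact Finset.univ_nonempty
  set M := Finset.univ.sup' hne (fun k => |κ k|) with hM
  have hMlt : M < sSup (Tol μ x t) := by
    apply Finset.sup'_lt_iff hne |>.2
    intro k _; exact hκ k
  obtain ⟨τ, hτmem, hτlt⟩ := exists_lt_of_lt_csSup ⟨0, tol_zero_mem μ x t⟩ hMlt
  exact hτmem.2 κ (fun k =>
    le_of_lt (lt_of_le_of_lt (Finset.le_sup' (fun k => |κ k|) (Finset.mem_univ k)) hτlt))

/-- Lemma 1, conjunction case: shifting each agent by strictly less than the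
minimum of the two tolerance suprema preserves the truth values of both predicates. -/
theorem atr_conjunction_sound
    {m : ℕ} (hm : 1 ≤ m) (μ₁ μ₂ : (Fin m → E) → ℝ) (x : Fin m → ℝ → E) (t₁ t₂ : ℝ)
    (hbdd₁ : BddAbove (Tol μ₁ x t₁)) (hbdd₂ : BddAbove (Tol μ₂ x t₂))
    (κ : Fin m → ℝ)
    (hκ : ∀ k, |κ k| < min (sSup (Tol μ₁ x t₁)) (sSup (Tol μ₂ x t₂))) :
    chi μ₁ (shift x κ) t₁ = chi μ₁ x t₁ ∧ chi μ₂ (shift x κ) t₂ = chi μ₂ x t₂ := by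
  constructor
  · exact chi_shift_eq hm μ₁ x t₁ κ (fun k => lt_of_lt_of_le (hκ k) (min_le_left _ _))
  · exact chi_shift_eq hm μ₂ x t₂ κ (fun k => lt_of_lt_of_le (hκ k) (min_le_right _ _))
end

section
/- (Lemma 1, disjunction case.) Fix times t₁, t₂ ∈ ℝ and assume T₁(x,t₁) and T₂(x,t₂) are both bounded above. Let c := max (sSup (T₁(x,t₁))) (sSup (T₂(x,t₂))). Then for every shift vector κ : Fin m → ℝ with |κ k| < c for all k, at least one truth value is preserved: χ₁(x_κ, t₁) = χ₁(x, t₁) or χ₂(x_κ, t₂) = χ₂(x, t₂). -/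
open Set Classical

variable {E : Type*} [NormedAddCommGroup E] [NormedSpace ℝ E]

lemma tol_nonempty {m : ℕ} (μ : (Fin m → E) → ℝ) (x : Fin m → ℝ → E) (t : ℝ) :
    (Tol μ x t).Nonempty := by
  refine ⟨0, le_refl 0, fun κ hκ => ?_⟩
  have hκ0 : ∀ k, κ k = 0 := fun k => abs_nonpos_iff.mp (hκ k)
  have : shift x κ = x := by
    funext k s
    simp [shift, hκ0 k]
  rw [this]

/-- Lemma 1, disjunction case: shifting each agent by strictly less than the
maximum of the two tolerance suprema preserves at least one of the two truth values. -/
theorem atr_disjunction_sound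
    {m : ℕ} (hm : 1 ≤ m) (μ₁ μ₂ : (Fin m → E) → ℝ) (x : Fin m → ℝ → E) (t₁ t₂ : ℝ)
    (hbdd₁ : BddAbove (Tol μ₁ x t₁)) (hbdd₂ : BddAbove (Tol μ₂ x t₂))
    (κ : Fin m → ℝ)
    (hκ : ∀ k, |κ k| < max (sSup (Tol μ₁ x t₁)) (sSup (Tol μ₂ x t₂))) :
    chi μ₁ (shift x κ) t₁ = chi μ₁ x t₁ ∨ chi μ₂ (shift x κ) t₂ = chi μ₂ x t₂ := by
  rcases max_cases (sSup (Tol μ₁ x t₁)) (sSup (Tol μ₂ x t₂)) with ⟨h, -⟩ | ⟨h, -⟩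
  · exact Or.inl (chi_shift_eq hm μ₁ x t₁ κ (fun k => h ▸ hκ k))
  · exact Or.inr (chi_shift_eq hm μ₂ x t₂ κ (fun k => h ▸ hκ k))
end

section
/- (Theorem 1, predicate case: segment ATR underapproximates pointwise ATR.) Suppose χ_seg(x,i) = 1, i.e. μ (fun k => x k t) ≥ 0 for all t ∈ I_i. Then for every t ∈ I_i one has the inclusion T_seg(x,i) ⊆ T(x,t); consequently, if T_seg(x,i) is nonempty and T(x,t) is bounded above, then θ_seg(x,i) = sSup (T_seg(x,i)) ≤ sSup (T(x,t)) = θ̄(x,t). -/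
open Set Classical

variable {E : Type*} [NormedAddCommGroup E] [NormedSpace ℝ E]

/-- Time span of segment `i`: the interval `[a i, a (i+1)]` between consecutive breakpoints. -/
def segI {N : ℕ} (a : Fin (N + 1) → ℝ) (i : Fin N) : Set ℝ :=
  Set.Icc (a i.castSucc) (a i.succ)

/-- The segment characteristic function: `1` if the predicate holds throughout the time span
of segment `i`, `-1` otherwise. -/
noncomputable def chiSeg {m N : ℕ} (μ : (Fin m → E) → ℝ) (x : Fin m → ℝ → E)
    (a : Fin (N + 1) → ℝ) (i : Fin N) : ℝ :=
  if ∀ t ∈ segI a i, 0 ≤ μ (fun k => x k t) then 1 else -1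

/-- `J τ i`: segments `j` whose time span, shifted by some `|s| ≤ τ`, intersects the time
span of segment `i`. -/
def Jset {N : ℕ} (a : Fin (N + 1) → ℝ) (τ : ℝ) (i : Fin N) : Set (Fin N) :=
  {j : Fin N | ∃ s : ℝ, |s| ≤ τ ∧ (((fun u => u + s) '' segI a j) ∩ segI a i).Nonempty}

/-- The segment tolerance set: nonnegative `τ` such that every asynchronous shift with
`|κ k| ≤ τ` keeps the segment characteristic, on all segments in `J τ i`, equal to that
of segment `i`. -/
def TolSeg {m N : ℕ} (μ : (Fin m → E) → ℝ) (x : Fin m → ℝ → E)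
    (a : Fin (N + 1) → ℝ) (i : Fin N) : Set ℝ :=
  {τ : ℝ | 0 ≤ τ ∧ ∀ κ : Fin m → ℝ, (∀ k, |κ k| ≤ τ) →
    ∀ j ∈ Jset a τ i, chiSeg μ (shift x κ) a j = chiSeg μ x a i}

/-- The segment recursive ATR of segment `i`. -/
noncomputable def thetaSeg {m N : ℕ} (μ : (Fin m → E) → ℝ) (x : Fin m → ℝ → E)
    (a : Fin (N + 1) → ℝ) (i : Fin N) : ℝ :=
  chiSeg μ x a i * sSup (TolSeg μ x a i)

/-- Theorem 1, predicate case: if segment `i` satisfies the predicate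
throughout its time span, then for every `t` in that time span the segment tolerance set
is contained in the pointwise tolerance set; consequently the segment ATR
`θ_seg(x,i) = sSup (T_seg(x,i))` underapproximates the pointwise ATR
`θ̄(x,t) = sSup (T(x,t))`. -/
theorem segment_atr_underapproximates_predicate
    {m N : ℕ} (hm : 1 ≤ m) (hN : 1 ≤ N) (μ : (Fin m → E) → ℝ) (x : Fin m → ℝ → E)
    (a : Fin (N + 1) → ℝ) (ha : StrictMono a) (i : Fin N)
    (hchi : chiSeg μ x a i = 1) :
    ∀ t ∈ segI a i,
      TolSeg μ x a i ⊆ Tol μ x t ∧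
      ((TolSeg μ x a i).Nonempty → BddAbove (Tol μ x t) →
        sSup (TolSeg μ x a i) ≤ sSup (Tol μ x t)) := by
  intro t ht
  have hpos : ∀ s ∈ segI a i, 0 ≤ μ (fun k => x k s) := by
    by_contra h
    simp only [chiSeg, if_neg h] at hchi
    norm_num at hchi
  have hsub : TolSeg μ x a i ⊆ Tol μ x t := by
    intro τ hτ
    obtain ⟨hτ0, hτk⟩ := hτ
    refine ⟨hτ0, fun κ hκ => ?_⟩
    have hmem : a i.castSucc ∈ segI a i :=
      ⟨le_refl _, le_of_lt (ha Fin.castSucc_lt_succ)⟩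
    have hiJ : i ∈ Jset a τ i :=
      ⟨0, by simpa using hτ0, ⟨a i.castSucc, ⟨a i.castSucc, hmem, by ring⟩, hmem⟩⟩
    have h1 := hτk κ hκ i hiJ
    rw [hchi] at h1
    have hshift : ∀ s ∈ segI a i, 0 ≤ μ (fun k => shift x κ k s) := by
      by_contra h
      simp only [chiSeg, if_neg h] at h1
      norm_num at h1
    simp [chi, hshift t ht, hpos t ht]
  exact ⟨hsub, fun hne hbdd => csSup_le_csSup hbdd hne hsub⟩
end

section
/- (Theorem 1, Always case.) Let I := Set.Icc c₁ c₂ with a 0 ≤ c₁ ≤ c₂ ≤ a N (so I is covered by the segments). Assume that for every segment i with (I_i ∩ I).Nonempty one has χ_seg(x,i) = 1 and T_seg(x,i) nonempty, and that T(x,t) is bounded above for every t ∈ I. Then for every t ∈ I, the minimum over {i | (I_i ∩ I).Nonempty} of θ_seg(x,i) is at most θ̄(x,t); in particular this minimum is at most sInf {θ̄(x,t) | t ∈ I}, i.e., the segment ATR of Always_I p underapproximates the continuous-time ATR of Always_I p. -/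
open Set Classical

variable {E : Type*} [NormedAddCommGroup E] [NormedSpace ℝ E]

lemma exists_seg_mem {N : ℕ} (hN : 1 ≤ N) (a : Fin (N + 1) → ℝ) (ha : Monotone a)
    {t : ℝ} (h0 : a 0 ≤ t) (h1 : t ≤ a (Fin.last N)) :
    ∃ i : Fin N, t ∈ segI a i := by
  classical
  set S : Finset (Fin (N + 1)) := Finset.univ.filter (fun i => a i ≤ t) with hSdef
  have hS : S.Nonempty := ⟨0, by simp [hSdef, h0]⟩
  set j := S.max' hS with hjdef
  have hj : a j ≤ t := by
    have := S.max'_mem hS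
    simpa [hSdef] using this
  by_cases hjN : (j : ℕ) < N
  · refine ⟨⟨j, hjN⟩, ?_, ?_⟩
    · have : (⟨j, hjN⟩ : Fin N).castSucc = j := by ext; rfl
      rw [this]; exact hj
    · by_contra hlt
      push_neg at hlt
      have hmem : (⟨(j : ℕ) + 1, by omega⟩ : Fin (N + 1)) ∈ S := by
        simp only [hSdef, Finset.mem_filter, Finset.mem_univ, true_and]
        have : (⟨j, hjN⟩ : Fin N).succ = (⟨(j : ℕ) + 1, by omega⟩ : Fin (N + 1)) := by
          ext; rfl
        rw [← this]; exact le_of_lt hlt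
      have := S.le_max' _ hmem
      have : (j : ℕ) + 1 ≤ (j : ℕ) := this
      omega
  · have hjval : (j : ℕ) = N := by have := j.isLt; omega
    have hjeq : j = Fin.last N := by ext; simpa using hjval
    have ht : t = a (Fin.last N) := le_antisymm h1 (hjeq ▸ hj)
    refine ⟨⟨N - 1, by omega⟩, ?_, ?_⟩
    · have : a (⟨N - 1, by omega⟩ : Fin N).castSucc ≤ a (Fin.last N) :=
        ha (Fin.le_last _)
      exact this.trans_eq ht.symm
    · have hsucc : (⟨N - 1, by omega⟩ : Fin N).succ = Fin.last N := by
        ext; simp [Fin.last]; omega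
      rw [hsucc, ht]

lemma chiSeg_eq_one_iff {m N : ℕ} (μ : (Fin m → E) → ℝ) (x : Fin m → ℝ → E)
    (a : Fin (N + 1) → ℝ) (i : Fin N) (h : chiSeg μ x a i = 1) :
    ∀ t ∈ segI a i, 0 ≤ μ (fun k => x k t) := by
  by_contra hP
  rw [chiSeg, if_neg hP] at h
  norm_num at h

/-- Theorem 1, Always case: with `I = [c₁, c₂]` covered by the segments, the
minimum of the segment ATRs over segments intersecting `I` is at most `θ̄(x,t)` for every
`t ∈ I`; in particular it is at most `sInf {θ̄(x,t) | t ∈ I}`, the continuous-time ATR of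
`Always_I p`. -/
theorem segment_atr_underapproximates_always
    {m N : ℕ} (hm : 1 ≤ m) (hN : 1 ≤ N) (μ : (Fin m → E) → ℝ) (x : Fin m → ℝ → E)
    (a : Fin (N + 1) → ℝ) (ha : StrictMono a)
    (c₁ c₂ : ℝ) (hc₁ : a 0 ≤ c₁) (hc : c₁ ≤ c₂) (hc₂ : c₂ ≤ a (Fin.last N))
    (hchi : ∀ i : Fin N, (segI a i ∩ Set.Icc c₁ c₂).Nonempty → chiSeg μ x a i = 1)
    (hne : ∀ i : Fin N, (segI a i ∩ Set.Icc c₁ c₂).Nonempty → (TolSeg μ x a i).Nonempty)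
    (hbdd : ∀ t ∈ Set.Icc c₁ c₂, BddAbove (Tol μ x t)) :
    (∀ t ∈ Set.Icc c₁ c₂,
      sInf ((fun i => thetaSeg μ x a i) '' {i : Fin N | (segI a i ∩ Set.Icc c₁ c₂).Nonempty})
        ≤ theta μ x t) ∧
    sInf ((fun i => thetaSeg μ x a i) '' {i : Fin N | (segI a i ∩ Set.Icc c₁ c₂).Nonempty})
      ≤ sInf ((fun t => theta μ x t) '' Set.Icc c₁ c₂) := by
  set M := ((fun i => thetaSeg μ x a i) ''
    {i : Fin N | (segI a i ∩ Set.Icc c₁ c₂).Nonempty}) with hM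
  have hMfin : M.Finite := (Set.toFinite _).image _
  have key : ∀ t ∈ Set.Icc c₁ c₂, sInf M ≤ theta μ x t := by
    intro t ht
    obtain ⟨i, hti⟩ := exists_seg_mem hN a ha.monotone
      (le_trans hc₁ ht.1) (le_trans ht.2 hc₂)
    have hii : (segI a i ∩ Set.Icc c₁ c₂).Nonempty := ⟨t, hti, ht⟩
    have hchii := hchi i hii
    have hpred := chiSeg_eq_one_iff μ x a i hchii
    have hchit : chi μ x t = 1 := by rw [chi, if_pos (hpred t hti)]
    -- TolSeg ⊆ Tol t
    have hsub : TolSeg μ x a i ⊆ Tol μ x t := by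
      rintro τ ⟨hτ0, hτ⟩
      refine ⟨hτ0, fun κ hκ => ?_⟩
      have hiJ : i ∈ Jset a τ i := by
        refine ⟨0, by simpa using hτ0, ⟨a i.castSucc, ?_, ?_⟩⟩
        · exact ⟨a i.castSucc, ⟨le_refl _, le_of_lt (ha (Fin.castSucc_lt_succ : i.castSucc < i.succ))⟩,
            by ring⟩
        · exact ⟨le_refl _, le_of_lt (ha (Fin.castSucc_lt_succ : i.castSucc < i.succ))⟩
      have h1 : chiSeg μ (shift x κ) a i = 1 := (hτ κ hκ i hiJ).trans hchii
      have := chiSeg_eq_one_iff μ (shift x κ) a i h1 t hti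
      rw [chi, if_pos this, hchit]
    have hsup : sSup (TolSeg μ x a i) ≤ sSup (Tol μ x t) :=
      csSup_le_csSup (hbdd t ht) (hne i hii) hsub
    have hθ : thetaSeg μ x a i ≤ theta μ x t := by
      rw [thetaSeg, theta, hchii, hchit, one_mul, one_mul]; exact hsup
    have hmem : thetaSeg μ x a i ∈ M := ⟨i, hii, rfl⟩
    exact le_trans (csInf_le hMfin.bddBelow hmem) hθ
  refine ⟨key, ?_⟩
  have hIne : ((fun t => theta μ x t) '' Set.Icc c₁ c₂).Nonempty :=
    ⟨theta μ x c₁, c₁, ⟨le_refl _, hc⟩, rfl⟩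
  refine le_csInf hIne ?_
  rintro b ⟨t, ht, rfl⟩
  exact key t ht
end

section
/- (Theorem 1, Eventually case.) Let I ⊆ ℝ be such that some segment time span intersects I. Assume that for every segment i with (I_i ∩ I).Nonempty one has χ_seg(x,i) = 1 and T_seg(x,i) nonempty, that T(x,t) is bounded above for every t ∈ I, and that {θ̄(x,t) | t ∈ I} is bounded above. Then the maximum over {i | (I_i ∩ I).Nonempty} of θ_seg(x,i) is at most sSup {θ̄(x,t) | t ∈ I}, i.e., the segment ATR of Eventually_I p underapproximates the continuous-time ATR of Eventually_I p. -/
open Set Classical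

variable {E : Type*} [NormedAddCommGroup E] [NormedSpace ℝ E]

/-- Theorem 1, Eventually case: the maximum of the segment ATRs over segments
intersecting `I` is at most `sSup {θ̄(x,t) | t ∈ I}`, the continuous-time ATR of
`Eventually_I p`. -/
theorem segment_atr_underapproximates_eventually
    {m N : ℕ} (hm : 1 ≤ m) (hN : 1 ≤ N) (μ : (Fin m → E) → ℝ) (x : Fin m → ℝ → E)
    (a : Fin (N + 1) → ℝ) (ha : StrictMono a) (I : Set ℝ)
    (hex : ∃ i : Fin N, (segI a i ∩ I).Nonempty)
    (hchi : ∀ i : Fin N, (segI a i ∩ I).Nonempty → chiSeg μ x a i = 1)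
    (hne : ∀ i : Fin N, (segI a i ∩ I).Nonempty → (TolSeg μ x a i).Nonempty)
    (hbdd : ∀ t ∈ I, BddAbove (Tol μ x t))
    (hbdd' : BddAbove ((fun t => theta μ x t) '' I)) :
    sSup ((fun i => thetaSeg μ x a i) '' {i : Fin N | (segI a i ∩ I).Nonempty})
      ≤ sSup ((fun t => theta μ x t) '' I) := by
  obtain ⟨i0, hi0⟩ := hex
  refine csSup_le ⟨thetaSeg μ x a i0, ⟨i0, hi0, rfl⟩⟩ ?_
  rintro v ⟨i, hi, rfl⟩
  obtain ⟨t, hts, htI⟩ := hi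
  have hcs : chiSeg μ x a i = 1 := hchi i ⟨t, hts, htI⟩
  have hall : ∀ u ∈ segI a i, 0 ≤ μ (fun k => x k u) := by
    by_contra h
    simp only [chiSeg, if_neg h] at hcs
    norm_num at hcs
  have hchit : chi μ x t = 1 := by
    simp [chi, hall t hts]
  have hsub : TolSeg μ x a i ⊆ Tol μ x t := by
    rintro τ ⟨hτ0, hτ⟩
    refine ⟨hτ0, fun κ hκ => ?_⟩
    have hiJ : i ∈ Jset a τ i := by
      refine ⟨0, by simpa using hτ0, ⟨a i.castSucc, ⟨⟨a i.castSucc, ?_, by ring⟩, ?_⟩⟩⟩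
      · exact ⟨le_refl _, le_of_lt (ha (Fin.castSucc_lt_succ : i.castSucc < i.succ))⟩
      · exact ⟨le_refl _, le_of_lt (ha (Fin.castSucc_lt_succ : i.castSucc < i.succ))⟩
    have hj := hτ κ hκ i hiJ
    rw [hcs] at hj
    have hall' : ∀ u ∈ segI a i, 0 ≤ μ (fun k => shift x κ k u) := by
      by_contra h
      simp only [chiSeg, if_neg h] at hj
      norm_num at hj
    rw [hchit]
    simp [chi, hall' t hts]
  have h1 : sSup (TolSeg μ x a i) ≤ sSup (Tol μ x t) :=
    csSup_le_csSup (hbdd t htI) (hne i ⟨t, hts, htI⟩) hsub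
  have h2 : thetaSeg μ x a i ≤ theta μ x t := by
    rw [thetaSeg, theta, hcs, hchit, one_mul, one_mul]
    exact h1
  exact h2.trans (le_csSup hbdd' ⟨t, htI, rfl⟩)
end

section
/- (Soundness of positive segment ATR, predicate case.) Suppose χ_seg(x,i) = 1, T_seg(x,i) is nonempty and bounded above, and the shift vector κ : Fin m → ℝ satisfies |κ k| < sSup (T_seg(x,i)) for every k. Then the shifted signal satisfies the predicate throughout the segment: μ (fun k => x_κ k t) ≥ 0 for all t ∈ I_i. -/
open Set Classical

variable {E : Type*} [NormedAddCommGroup E] [NormedSpace ℝ E]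

/-- soundness of positive segment ATR, predicate case: shifting each agent
by strictly less than `sSup (T_seg(x,i))` keeps the predicate satisfied throughout the
time span of segment `i`. -/
theorem segment_atr_predicate_sound
    {m N : ℕ} (hm : 1 ≤ m) (hN : 1 ≤ N) (μ : (Fin m → E) → ℝ) (x : Fin m → ℝ → E)
    (a : Fin (N + 1) → ℝ) (ha : StrictMono a) (i : Fin N)
    (hchi : chiSeg μ x a i = 1)
    (hne : (TolSeg μ x a i).Nonempty) (hbdd : BddAbove (TolSeg μ x a i))
    (κ : Fin m → ℝ) (hκ : ∀ k, |κ k| < sSup (TolSeg μ x a i)) :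
    ∀ t ∈ segI a i, 0 ≤ μ (fun k => shift x κ k t) := by
  -- pick M = max |κ k|
  have hmpos : (0 : ℕ) < m := hm
  haveI : Nonempty (Fin m) := ⟨⟨0, hmpos⟩⟩
  set M := Finset.univ.sup' Finset.univ_nonempty (fun k => |κ k|) with hM
  have hMlt : M < sSup (TolSeg μ x a i) := by
    apply Finset.sup'_lt_iff Finset.univ_nonempty |>.mpr
    intro k _; exact hκ k
  obtain ⟨τ, hτmem, hMτ⟩ := exists_lt_of_lt_csSup hne hMlt
  obtain ⟨hτ0, hτprop⟩ := hτmem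
  have hκτ : ∀ k, |κ k| ≤ τ := fun k =>
    le_of_lt (lt_of_le_of_lt (Finset.le_sup' (fun k => |κ k|) (Finset.mem_univ k)) hMτ)
  have hiJ : i ∈ Jset a τ i := by
    refine ⟨0, by simpa using hτ0, ?_⟩
    have hne' : (segI a i).Nonempty := Set.nonempty_Icc.mpr (le_of_lt (ha Fin.castSucc_lt_succ))
    obtain ⟨t, ht⟩ := hne'
    exact ⟨t, ⟨t, ht, by simp⟩, ht⟩
  have heq : chiSeg μ (shift x κ) a i = 1 := (hτprop κ hκτ i hiJ).trans hchi
  intro t ht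
  by_contra h
  unfold chiSeg at heq
  rw [if_neg] at heq
  · norm_num at heq
  · push_neg
    exact ⟨t, ht, lt_of_not_ge h⟩
end

section
/- (Soundness of positive segment ATR, Always case.) Let I := Set.Icc c₁ c₂ with a 0 ≤ c₁ ≤ c₂ ≤ a N. Assume that for every segment i with (I_i ∩ I).Nonempty one has χ_seg(x,i) = 1 and T_seg(x,i) nonempty and bounded above. If the shift vector κ : Fin m → ℝ satisfies, for all k, |κ k| < min over {i | (I_i ∩ I).Nonempty} of θ_seg(x,i), then the shifted signal satisfies Always_I p: μ (fun k => x_κ k t) ≥ 0 for every t ∈ I. -/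
open Set Classical

variable {E : Type*} [NormedAddCommGroup E] [NormedSpace ℝ E]

/-- soundness of positive segment ATR, Always case: shifting each agent by
strictly less than the minimum of the segment ATRs over segments intersecting
`I = [c₁, c₂]` keeps the predicate satisfied throughout `I`. -/
theorem segment_atr_always_sound
    {m N : ℕ} (hm : 1 ≤ m) (hN : 1 ≤ N) (μ : (Fin m → E) → ℝ) (x : Fin m → ℝ → E)
    (a : Fin (N + 1) → ℝ) (ha : StrictMono a)
    (c₁ c₂ : ℝ) (hc₁ : a 0 ≤ c₁) (hc : c₁ ≤ c₂) (hc₂ : c₂ ≤ a (Fin.last N))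
    (hchi : ∀ i : Fin N, (segI a i ∩ Set.Icc c₁ c₂).Nonempty → chiSeg μ x a i = 1)
    (hne : ∀ i : Fin N, (segI a i ∩ Set.Icc c₁ c₂).Nonempty → (TolSeg μ x a i).Nonempty)
    (hbdd : ∀ i : Fin N, (segI a i ∩ Set.Icc c₁ c₂).Nonempty → BddAbove (TolSeg μ x a i))
    (κ : Fin m → ℝ)
    (hκ : ∀ k, |κ k| <
      sInf ((fun i => thetaSeg μ x a i) '' {i : Fin N | (segI a i ∩ Set.Icc c₁ c₂).Nonempty})) :
    ∀ t ∈ Set.Icc c₁ c₂, 0 ≤ μ (fun k => shift x κ k t) := by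
  intro t ht
  -- find a segment containing t
  have hNpos : 0 < N := hN
  have hcover : ∃ i : Fin N, t ∈ segI a i := by
    classical
    have h0 : a ((⟨0, hNpos⟩ : Fin N).castSucc) ≤ t := by
      have : (⟨0, hNpos⟩ : Fin N).castSucc = 0 := rfl
      rw [this]; exact le_trans hc₁ ht.1
    let S : Finset (Fin N) := Finset.univ.filter (fun i => a i.castSucc ≤ t)
    have hSne : S.Nonempty := ⟨⟨0, hNpos⟩, Finset.mem_filter.mpr ⟨Finset.mem_univ _, h0⟩⟩
    obtain ⟨i, hiS, hmax⟩ := S.exists_max_image (fun i => (i : ℕ)) hSne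
    have hi : a i.castSucc ≤ t := by simpa [S] using hiS
    refine ⟨i, hi, ?_⟩
    by_contra hlt
    push_neg at hlt
    have hsucc : (i : ℕ) + 1 < N := by
      by_contra hge
      push_neg at hge
      have : i.succ = Fin.last N := by
        ext; simp; omega
      have : t ≤ a i.succ := by
        rw [this]; exact le_trans ht.2 hc₂
      linarith
    have : (⟨(i : ℕ) + 1, hsucc⟩ : Fin N) ∈ S := by
      simp only [S, Finset.mem_filter, Finset.mem_univ, true_and]
      have : a ((⟨(i : ℕ) + 1, hsucc⟩ : Fin N).castSucc) = a i.succ := by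
        rfl
      rw [this]; exact le_of_lt hlt
    have := hmax _ this
    simp at this
  obtain ⟨i, hti⟩ := hcover
  have hiI : (segI a i ∩ Set.Icc c₁ c₂).Nonempty := ⟨t, hti, ht⟩
  -- sInf of the finite image ≤ thetaSeg i
  have himg : thetaSeg μ x a i ∈
      (fun i => thetaSeg μ x a i) '' {i : Fin N | (segI a i ∩ Set.Icc c₁ c₂).Nonempty} :=
    ⟨i, hiI, rfl⟩
  have hfin : ((fun i => thetaSeg μ x a i) ''
      {i : Fin N | (segI a i ∩ Set.Icc c₁ c₂).Nonempty}).Finite :=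
    Set.Finite.image _ (Set.toFinite _)
  have hInf_le : sInf ((fun i => thetaSeg μ x a i) ''
      {i : Fin N | (segI a i ∩ Set.Icc c₁ c₂).Nonempty}) ≤ thetaSeg μ x a i :=
    csInf_le hfin.bddBelow himg
  have htheta : thetaSeg μ x a i = sSup (TolSeg μ x a i) := by
    unfold thetaSeg; rw [hchi i hiI, one_mul]
  -- max shift magnitude
  have hmne : (Finset.univ : Finset (Fin m)).Nonempty := ⟨⟨0, hm⟩, Finset.mem_univ _⟩
  set M := Finset.univ.sup' hmne (fun k => |κ k|) with hM
  obtain ⟨k₀, _, hk₀⟩ := Finset.exists_mem_eq_sup' hmne (fun k => |κ k|)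
  have hMlt : M < sSup (TolSeg μ x a i) := by
    rw [hM, hk₀, ← htheta]
    exact lt_of_lt_of_le (hκ k₀) hInf_le
  obtain ⟨τ, hτmem, hMτ⟩ := exists_lt_of_lt_csSup (hne i hiI) hMlt
  obtain ⟨hτ0, hτprop⟩ := hτmem
  have hκτ : ∀ k, |κ k| ≤ τ := fun k =>
    le_of_lt (lt_of_le_of_lt (Finset.le_sup' (fun k => |κ k|) (Finset.mem_univ k)) hMτ)
  have hiJ : i ∈ Jset a τ i := by
    refine ⟨0, by simpa using hτ0, ⟨a i.castSucc, ?_, ?_⟩⟩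
    · exact ⟨a i.castSucc, ⟨le_refl _, le_of_lt (ha i.castSucc_lt_succ)⟩, by ring⟩
    · exact ⟨le_refl _, le_of_lt (ha i.castSucc_lt_succ)⟩
  have hχ : chiSeg μ (shift x κ) a i = 1 := by
    rw [hτprop κ hκτ i hiJ, hchi i hiI]
  unfold chiSeg at hχ
  split_ifs at hχ with h
  · exact h t hti
  · norm_num at hχ
end

section
/- (Soundness of positive segment ATR, Eventually case.) Let I ⊆ ℝ be such that some segment time span intersects I. Assume that for every segment i with (I_i ∩ I).Nonempty one has χ_seg(x,i) = 1 and T_seg(x,i) nonempty and bounded above. If the shift vector κ : Fin m → ℝ satisfies, for all k, |κ k| < max over {i | (I_i ∩ I).Nonempty} of θ_seg(x,i), then the shifted signal satisfies Eventually_I p: there exists t ∈ I with μ (fun k => x_κ k t) ≥ 0. -/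
open Set Classical

variable {E : Type*} [NormedAddCommGroup E] [NormedSpace ℝ E]

/-- soundness of positive segment ATR, Eventually case: shifting each agent
by strictly less than the maximum of the segment ATRs over segments intersecting `I` keeps
the predicate satisfied at some time in `I`. -/
theorem segment_atr_eventually_sound
    {m N : ℕ} (hm : 1 ≤ m) (hN : 1 ≤ N) (μ : (Fin m → E) → ℝ) (x : Fin m → ℝ → E)
    (a : Fin (N + 1) → ℝ) (ha : StrictMono a) (I : Set ℝ)
    (hex : ∃ i : Fin N, (segI a i ∩ I).Nonempty)
    (hchi : ∀ i : Fin N, (segI a i ∩ I).Nonempty → chiSeg μ x a i = 1)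
    (hne : ∀ i : Fin N, (segI a i ∩ I).Nonempty → (TolSeg μ x a i).Nonempty)
    (hbdd : ∀ i : Fin N, (segI a i ∩ I).Nonempty → BddAbove (TolSeg μ x a i))
    (κ : Fin m → ℝ)
    (hκ : ∀ k, |κ k| <
      sSup ((fun i => thetaSeg μ x a i) '' {i : Fin N | (segI a i ∩ I).Nonempty})) :
    ∃ t ∈ I, 0 ≤ μ (fun k => shift x κ k t) := by

  -- The set of relevant segments and its image is finite and nonempty.
  set S : Set (Fin N) := {i : Fin N | (segI a i ∩ I).Nonempty} with hS
  have hSne : S.Nonempty := hex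
  have hfin : ((fun i => thetaSeg μ x a i) '' S).Finite :=
    (Set.toFinite S).image _
  have himne : ((fun i => thetaSeg μ x a i) '' S).Nonempty := hSne.image _
  obtain ⟨i₀, hi₀S, hi₀⟩ := himne.csSup_mem hfin
  have hi₀mem : (segI a i₀ ∩ I).Nonempty := hi₀S
  have hchi0 : chiSeg μ x a i₀ = 1 := hchi i₀ hi₀mem
  have htheta : thetaSeg μ x a i₀ = sSup (TolSeg μ x a i₀) := by
    simp [thetaSeg, hchi0]
  -- max of |κ k|
  have hmne : (Finset.univ : Finset (Fin m)).Nonempty := by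
    have : Nonempty (Fin m) := ⟨⟨0, hm⟩⟩
    exact Finset.univ_nonempty
  set M := Finset.univ.sup' hmne (fun k => |κ k|) with hM
  have hMlt : M < sSup (TolSeg μ x a i₀) := by
    rw [← htheta]
    beta_reduce at hi₀
    rw [hi₀]
    apply Finset.sup'_lt_iff hmne |>.2
    intro k _
    exact hκ k
  obtain ⟨τ, hτmem, hτgt⟩ := exists_lt_of_lt_csSup (hne i₀ hi₀mem) hMlt
  have hκτ : ∀ k, |κ k| ≤ τ := fun k =>
    le_of_lt (lt_of_le_of_lt (Finset.le_sup' (fun k => |κ k|) (Finset.mem_univ k)) hτgt)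
  have hτ0 : 0 ≤ τ := hτmem.1
  -- i₀ ∈ Jset a τ i₀
  have hJ : i₀ ∈ Jset a τ i₀ := by
    refine ⟨0, by simpa using hτ0, ?_⟩
    have hseg : (segI a i₀).Nonempty := ⟨a i₀.castSucc, le_refl _, le_of_lt (ha i₀.castSucc_lt_succ)⟩
    obtain ⟨u, hu⟩ := hseg
    exact ⟨u, ⟨u, hu, by ring⟩, hu⟩
  have hchishift : chiSeg μ (shift x κ) a i₀ = 1 :=
    (hτmem.2 κ hκτ i₀ hJ).trans hchi0
  have hall : ∀ t ∈ segI a i₀, 0 ≤ μ (fun k => shift x κ k t) := by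
    by_contra h
    simp only [chiSeg, if_neg h] at hchishift
    norm_num at hchishift
  obtain ⟨t, htseg, htI⟩ := hi₀mem
  exact ⟨t, htI, hall t htseg⟩
end

section
/- (Derivative of a Bézier curve.) For every s ∈ ℝ, the degree-d Bézier curve B has derivative at s equal to the degree-(d−1) Bézier curve built from the control points d • (P (b+1) − P b); that is, B has derivative ∑_{b=0}^{d−1} (Nat.choose (d−1) b) · (1−s)^(d−1−b) · s^b • (d • (P (b+1) − P b)) at s. -/
open Set

variable {E : Type*} [NormedAddCommGroup E] [NormedSpace ℝ E]

noncomputable def bezier (d : ℕ) (P : Fin (d + 1) → E) (s : ℝ) : E :=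
  ∑ b : Fin (d + 1), (((d.choose (b : ℕ)) : ℝ) * (1 - s) ^ (d - (b : ℕ)) * s ^ (b : ℕ)) • P b

lemma coeff_hasDerivAt (d k : ℕ) (s : ℝ) :
    HasDerivAt (fun u : ℝ => ((d.choose k : ℝ) * (1 - u) ^ (d - k) * u ^ k))
      (-((d.choose k : ℝ) * ((d - k : ℕ) : ℝ) * (1 - s) ^ (d - k - 1) * s ^ k)
        + (d.choose k : ℝ) * (1 - s) ^ (d - k) * (k * s ^ (k - 1))) s := by
  have h1 : HasDerivAt (fun u : ℝ => (1 : ℝ) - u) (-1) s := by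
    simpa using (hasDerivAt_id' s).const_sub (1 : ℝ)
  have h2 := (h1.fun_pow (d - k)).const_mul ((d.choose k : ℝ))
  have h3 := h2.fun_mul (hasDerivAt_pow k s)
  refine h3.congr_deriv ?_
  ring

/-- derivative of a Bézier curve: the degree-`d` Bézier curve has, at every
`s`, derivative equal to the degree-`(d-1)` Bézier curve built from the control points
`d • (P (b+1) - P b)`. -/
theorem bezier_hasDerivAt
    (d : ℕ) (hd : 1 ≤ d) (P : Fin (d + 1) → E) (s : ℝ) :
    HasDerivAt (fun u => bezier d P u)
      (∑ b : Fin d, ((((d - 1).choose (b : ℕ)) : ℝ) * (1 - s) ^ (d - 1 - (b : ℕ)) * s ^ (b : ℕ))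
        • (d • (P b.succ - P b.castSucc))) s := by
  have H : HasDerivAt (fun u => bezier d P u)
      (∑ b : Fin (d + 1),
        ((-((d.choose (b : ℕ) : ℝ) * ((d - (b : ℕ) : ℕ) : ℝ) * (1 - s) ^ (d - (b : ℕ) - 1) * s ^ (b : ℕ))
          + (d.choose (b : ℕ) : ℝ) * (1 - s) ^ (d - (b : ℕ)) * ((b : ℕ) * s ^ ((b : ℕ) - 1))) • P b)) s := by
    unfold bezier
    exact HasDerivAt.fun_sum fun b _ => (coeff_hasDerivAt d (b : ℕ) s).smul_const (P b)
  convert H using 1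
  -- now pure algebra on sums
  have key : ∀ b : Fin (d + 1),
      ((-((d.choose (b : ℕ) : ℝ) * ((d - (b : ℕ) : ℕ) : ℝ) * (1 - s) ^ (d - (b : ℕ) - 1) * s ^ (b : ℕ))
        + (d.choose (b : ℕ) : ℝ) * (1 - s) ^ (d - (b : ℕ)) * ((b : ℕ) * s ^ ((b : ℕ) - 1))) • P b)
      = (-((d.choose (b : ℕ) : ℝ) * ((d - (b : ℕ) : ℕ) : ℝ) * (1 - s) ^ (d - (b : ℕ) - 1) * s ^ (b : ℕ))) • P b
        + ((d.choose (b : ℕ) : ℝ) * (1 - s) ^ (d - (b : ℕ)) * ((b : ℕ) * s ^ ((b : ℕ) - 1))) • P b :=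
    fun b => add_smul _ _ _
  simp only [key, Finset.sum_add_distrib]
  -- Second part: peel off b = 0, reindex with succ
  have h2 : (∑ b : Fin (d + 1),
      ((d.choose (b : ℕ) : ℝ) * (1 - s) ^ (d - (b : ℕ)) * ((b : ℕ) * s ^ ((b : ℕ) - 1))) • P b)
      = ∑ b : Fin d,
        ((d : ℝ) * (((d - 1).choose (b : ℕ)) : ℝ) * (1 - s) ^ (d - 1 - (b : ℕ)) * s ^ (b : ℕ)) • P b.succ := by
    rw [Fin.sum_univ_succ]
    simp only [Fin.val_zero, Nat.cast_zero, zero_mul, mul_zero, zero_smul, zero_add,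
      Fin.val_succ]
    refine Finset.sum_congr rfl fun b _ => ?_
    congr 1
    have hc : (d.choose ((b : ℕ) + 1) : ℝ) * ((b : ℕ) + 1) = (d : ℝ) * ((d - 1).choose (b : ℕ)) := by
      have := Nat.add_one_mul_choose_eq (d - 1) (b : ℕ)
      rw [show d - 1 + 1 = d by omega] at this
      exact_mod_cast this.symm
    have he : d - ((b : ℕ) + 1) = d - 1 - (b : ℕ) := by omega
    rw [he]
    push_cast
    linear_combination (1 - s) ^ (d - 1 - (b : ℕ)) * s ^ (b : ℕ) * hc
  -- First part: peel off b = d, reindex with castSucc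
  have h1 : (∑ b : Fin (d + 1),
      (-((d.choose (b : ℕ) : ℝ) * ((d - (b : ℕ) : ℕ) : ℝ) * (1 - s) ^ (d - (b : ℕ) - 1) * s ^ (b : ℕ))) • P b)
      = ∑ b : Fin d,
        (-((d : ℝ) * (((d - 1).choose (b : ℕ)) : ℝ) * (1 - s) ^ (d - 1 - (b : ℕ)) * s ^ (b : ℕ))) • P b.castSucc := by
    rw [Fin.sum_univ_castSucc]
    simp only [Fin.val_last, Nat.sub_self, Nat.cast_zero, mul_zero, zero_mul, neg_zero,
      zero_smul, add_zero, Fin.coe_castSucc]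
    refine Finset.sum_congr rfl fun b _ => ?_
    congr 1
    have hc : (d.choose (b : ℕ) : ℝ) * ((d - (b : ℕ) : ℕ) : ℝ) = (d : ℝ) * ((d - 1).choose (b : ℕ)) := by
      have h1' := Nat.choose_succ_right_eq d (b : ℕ)
      have h2' := Nat.add_one_mul_choose_eq (d - 1) (b : ℕ)
      rw [show d - 1 + 1 = d by omega] at h2'
      have : d.choose (b : ℕ) * (d - (b : ℕ)) = d * (d - 1).choose (b : ℕ) := by
        rw [← h1', h2']
      exact_mod_cast this
    have he : d - (b : ℕ) - 1 = d - 1 - (b : ℕ) := by omega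
    rw [he]
    linear_combination (-((1 - s) ^ (d - 1 - (b : ℕ)) * s ^ (b : ℕ))) * hc
  rw [h1, h2]
  rw [← Finset.sum_add_distrib]
  refine Finset.sum_congr rfl fun b _ => ?_
  rw [← Nat.cast_smul_eq_nsmul ℝ d (P b.succ - P b.castSucc)]
  module
end

section
/- (Strict monotonicity of a temporal Bézier curve with positive derivative control points.) Let q : Fin (d+1) → ℝ be scalar control points with q (b+1) > q b for every b < d (equivalently, all derivative control points d·(q (b+1) − q b) are positive). Then the scalar Bézier curve h(s) := ∑_{b=0}^{d} (Nat.choose d b)·(1−s)^(d−b)·s^b · q b is strictly increasing on the interval [0,1]. -/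
open Set

/-- The degree-`d` scalar Bézier curve with control points `q`. -/
noncomputable def bezierR (d : ℕ) (q : Fin (d + 1) → ℝ) (s : ℝ) : ℝ :=
  ∑ b : Fin (d + 1), ((d.choose (b : ℕ)) : ℝ) * (1 - s) ^ (d - (b : ℕ)) * s ^ (b : ℕ) * q b

noncomputable def bezDeriv (d : ℕ) (q : Fin (d + 1) → ℝ) (s : ℝ) : ℝ :=
  (d : ℝ) * ∑ j : Fin d, (((d - 1).choose (j : ℕ)) : ℝ) * (1 - s) ^ (d - 1 - (j : ℕ)) *
    s ^ (j : ℕ) * (q j.succ - q j.castSucc)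

lemma hasDerivAt_bezierR (d : ℕ) (hd : 1 ≤ d) (q : Fin (d + 1) → ℝ) (s : ℝ) :
    HasDerivAt (fun s => bezierR d q s) (bezDeriv d q s) s := by
  have key : ∀ b : Fin (d + 1),
      HasDerivAt (fun s : ℝ => ((d.choose (b : ℕ)) : ℝ) * (1 - s) ^ (d - (b : ℕ)) *
        s ^ (b : ℕ) * q b)
      ((((d.choose (b : ℕ)) : ℝ) * ((((d - (b : ℕ)) : ℕ) : ℝ) * (1 - s) ^ (d - (b : ℕ) - 1) * (-1)) * s ^ (b : ℕ)
        + ((d.choose (b : ℕ)) : ℝ) * (1 - s) ^ (d - (b : ℕ)) * (((b : ℕ) : ℝ) * s ^ ((b : ℕ) - 1))) * q b) s := by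
    intro b
    have h1 : HasDerivAt (fun s : ℝ => (1 - s) ^ (d - (b : ℕ)))
        ((((d - (b : ℕ)) : ℕ) : ℝ) * (1 - s) ^ (d - (b : ℕ) - 1) * (-1)) s := by
      exact (hasDerivAt_pow (d - (b : ℕ)) (1 - s)).comp s ((hasDerivAt_id s).const_sub 1)
    have h2 : HasDerivAt (fun s : ℝ => s ^ (b : ℕ)) (((b : ℕ) : ℝ) * s ^ ((b : ℕ) - 1)) s :=
      hasDerivAt_pow (b : ℕ) s
    exact (((h1.const_mul _).mul h2).mul_const (q b))
  have hsum := HasDerivAt.fun_sum (u := Finset.univ) (fun b _ => key b)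
  convert hsum using 1
  case e'_4 => rfl
  case e'_5 => rfl
  case e'_8 => rfl
  -- now prove bezDeriv d q s = the sum of derivatives
  have splitE : ∑ b : Fin (d + 1),
      ((((d.choose (b : ℕ)) : ℝ) * ((((d - (b : ℕ)) : ℕ) : ℝ) * (1 - s) ^ (d - (b : ℕ) - 1) * (-1)) * s ^ (b : ℕ)
        + ((d.choose (b : ℕ)) : ℝ) * (1 - s) ^ (d - (b : ℕ)) * (((b : ℕ) : ℝ) * s ^ ((b : ℕ) - 1))) * q b)
      = (∑ b : Fin (d + 1), ((d.choose (b : ℕ)) : ℝ) * (((b : ℕ) : ℝ)) * (1 - s) ^ (d - (b : ℕ)) * s ^ ((b : ℕ) - 1) * q b)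
      - (∑ b : Fin (d + 1), ((d.choose (b : ℕ)) : ℝ) * ((((d - (b : ℕ)) : ℕ) : ℝ)) * (1 - s) ^ (d - (b : ℕ) - 1) * s ^ (b : ℕ) * q b) := by
    rw [← Finset.sum_sub_distrib]
    apply Finset.sum_congr rfl
    intro b _
    ring
  rw [splitE]
  -- A term
  have hA : (∑ b : Fin (d + 1), ((d.choose (b : ℕ)) : ℝ) * (((b : ℕ) : ℝ)) * (1 - s) ^ (d - (b : ℕ)) * s ^ ((b : ℕ) - 1) * q b)
      = ∑ j : Fin d, (d : ℝ) * (((d - 1).choose (j : ℕ)) : ℝ) * (1 - s) ^ (d - 1 - (j : ℕ)) * s ^ (j : ℕ) * q j.succ := by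
    rw [Fin.sum_univ_succ]
    simp only [Fin.val_zero, Nat.cast_zero, mul_zero, zero_mul, pow_zero, zero_add]
    apply Finset.sum_congr rfl
    intro j _
    have hj : (j : ℕ) < d := j.isLt
    have hnat : (d.choose ((j : ℕ) + 1)) * ((j : ℕ) + 1) = d * (d - 1).choose (j : ℕ) := by
      have h := Nat.add_one_mul_choose_eq (d - 1) (j : ℕ)
      rw [show d - 1 + 1 = d from by omega] at h
      exact h.symm
    have hcast : ((d.choose ((j : ℕ) + 1)) : ℝ) * (((j : ℕ) + 1 : ℕ) : ℝ)
        = (d : ℝ) * (((d - 1).choose (j : ℕ)) : ℝ) := by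
      rw [← Nat.cast_mul, ← Nat.cast_mul, hnat]
    have he : d - ((j : ℕ) + 1) = d - 1 - (j : ℕ) := by omega
    simp only [Fin.val_succ]
    push_cast
    rw [he]
    push_cast at hcast
    linear_combination ((1 - s) ^ (d - 1 - (j : ℕ)) * s ^ (j : ℕ) * q j.succ) * hcast
  have hB : (∑ b : Fin (d + 1), ((d.choose (b : ℕ)) : ℝ) * ((((d - (b : ℕ)) : ℕ) : ℝ)) * (1 - s) ^ (d - (b : ℕ) - 1) * s ^ (b : ℕ) * q b)
      = ∑ j : Fin d, (d : ℝ) * (((d - 1).choose (j : ℕ)) : ℝ) * (1 - s) ^ (d - 1 - (j : ℕ)) * s ^ (j : ℕ) * q j.castSucc := by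
    rw [Fin.sum_univ_castSucc]
    simp only [Fin.val_last, Nat.sub_self, Nat.cast_zero, mul_zero, zero_mul, add_zero]
    apply Finset.sum_congr rfl
    intro j _
    have hj : (j : ℕ) < d := j.isLt
    have hnat : (d.choose (j : ℕ)) * (d - (j : ℕ)) = d * (d - 1).choose (j : ℕ) := by
      have h := Nat.choose_mul_succ_eq (d - 1) (j : ℕ)
      rw [show d - 1 + 1 = d from by omega] at h
      calc d.choose (j : ℕ) * (d - (j : ℕ)) = (d - 1).choose (j : ℕ) * d := h.symm
        _ = d * (d - 1).choose (j : ℕ) := mul_comm _ _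
    have hcast : ((d.choose (j : ℕ)) : ℝ) * (((d - (j : ℕ) : ℕ)) : ℝ)
        = (d : ℝ) * (((d - 1).choose (j : ℕ)) : ℝ) := by
      rw [← Nat.cast_mul, ← Nat.cast_mul, hnat]
    have he : d - (j : ℕ) - 1 = d - 1 - (j : ℕ) := by omega
    simp only [Fin.coe_castSucc]
    rw [he]
    linear_combination ((1 - s) ^ (d - 1 - (j : ℕ)) * s ^ (j : ℕ) * q j.castSucc) * hcast
  rw [hA, hB, bezDeriv, Finset.mul_sum, ← Finset.sum_sub_distrib]
  apply Finset.sum_congr rfl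
  intro j _
  ring

lemma bezDeriv_pos (d : ℕ) (hd : 1 ≤ d) (q : Fin (d + 1) → ℝ)
    (hq : ∀ b : Fin d, q b.castSucc < q b.succ) {s : ℝ} (hs0 : 0 < s) (hs1 : s < 1) :
    0 < bezDeriv d q s := by
  unfold bezDeriv
  apply mul_pos (by exact_mod_cast hd)
  apply Finset.sum_pos
  · intro j _
    have hc : 0 < ((d - 1).choose (j : ℕ)) := Nat.choose_pos (by omega)
    have : (0:ℝ) < (((d - 1).choose (j : ℕ)) : ℝ) := by exact_mod_cast hc
    have h1s : (0:ℝ) < 1 - s := by linarith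
    have hdiff : (0:ℝ) < q j.succ - q j.castSucc := sub_pos.mpr (hq j)
    have hp1 : (0:ℝ) < (1 - s) ^ (d - 1 - (j : ℕ)) := pow_pos h1s _
    have hp2 : (0:ℝ) < s ^ (j : ℕ) := pow_pos hs0 _
    exact mul_pos (mul_pos (mul_pos this hp1) hp2) hdiff
  · have : Nonempty (Fin d) := Fin.pos_iff_nonempty.mp (by omega)
    exact Finset.univ_nonempty

/-- strict monotonicity of a temporal Bézier curve: if consecutive scalar
control points strictly increase (equivalently, the derivative control points
`d • (q (b+1) - q b)` are all positive), then the scalar Bézier curve is strictly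
increasing on `[0,1]`. -/
theorem bezierR_strictMonoOn
    (d : ℕ) (hd : 1 ≤ d) (q : Fin (d + 1) → ℝ)
    (hq : ∀ b : Fin d, q b.castSucc < q b.succ) :
    StrictMonoOn (fun s => bezierR d q s) (Set.Icc (0 : ℝ) 1) := by
  apply strictMonoOn_of_deriv_pos (convex_Icc 0 1)
  · apply Continuous.continuousOn
    have : ∀ s, bezierR d q s = bezierR d q s := fun _ => rfl
    unfold bezierR
    continuity
  · intro x hx
    rw [interior_Icc] at hx
    rw [(hasDerivAt_bezierR d hd q x).deriv]
    exact bezDeriv_pos d hd q hq hx.1 hx.2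
end

section
/- (Soundness of the control-point velocity constraints.) Let d ≥ 1, and let R : Fin d → ℝ and w : Fin d → ℝ be the derivative control points of the curvature and temporal curves, with w b > 0 for all b. Define V(s) := ∑_{b=0}^{d−1} (Nat.choose (d−1) b)·(1−s)^(d−1−b)·s^b · R b and W(s) := ∑_{b=0}^{d−1} (Nat.choose (d−1) b)·(1−s)^(d−1−b)·s^b · w b. If v_lo · w b ≤ R b ≤ v_hi · w b for every b, then for every s ∈ [0,1] one has W(s) > 0 and v_lo · W(s) ≤ V(s) ≤ v_hi · W(s); in particular the velocity V(s)/W(s) satisfies v_lo ≤ V(s)/W(s) ≤ v_hi for all s ∈ [0,1]. -/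
open Set

/-- soundness of the control-point velocity constraints: for the degree-
`(d-1)` derivative Bézier curves `V` (curvature) and `W` (temporal) with control points
`R` and `w`, if `w b > 0` and `v_lo * w b ≤ R b ≤ v_hi * w b` for all `b`, then on `[0,1]`
one has `W s > 0`, `v_lo * W s ≤ V s ≤ v_hi * W s`, and hence the velocity `V s / W s`
lies in `[v_lo, v_hi]`. -/
theorem bezier_velocity_constraints_sound
    (d : ℕ) (hd : 1 ≤ d) (R w : Fin d → ℝ) (hw : ∀ b, 0 < w b)
    (vlo vhi : ℝ)
    (hcons : ∀ b, vlo * w b ≤ R b ∧ R b ≤ vhi * w b) :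
    ∀ s ∈ Set.Icc (0 : ℝ) 1,
      0 < (∑ b : Fin d,
            (((d - 1).choose (b : ℕ)) : ℝ) * (1 - s) ^ (d - 1 - (b : ℕ)) * s ^ (b : ℕ) * w b) ∧
      vlo * (∑ b : Fin d,
            (((d - 1).choose (b : ℕ)) : ℝ) * (1 - s) ^ (d - 1 - (b : ℕ)) * s ^ (b : ℕ) * w b)
        ≤ (∑ b : Fin d,
            (((d - 1).choose (b : ℕ)) : ℝ) * (1 - s) ^ (d - 1 - (b : ℕ)) * s ^ (b : ℕ) * R b) ∧
      (∑ b : Fin d,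
            (((d - 1).choose (b : ℕ)) : ℝ) * (1 - s) ^ (d - 1 - (b : ℕ)) * s ^ (b : ℕ) * R b)
        ≤ vhi * (∑ b : Fin d,
            (((d - 1).choose (b : ℕ)) : ℝ) * (1 - s) ^ (d - 1 - (b : ℕ)) * s ^ (b : ℕ) * w b) ∧
      vlo ≤ (∑ b : Fin d,
            (((d - 1).choose (b : ℕ)) : ℝ) * (1 - s) ^ (d - 1 - (b : ℕ)) * s ^ (b : ℕ) * R b)
          / (∑ b : Fin d,
            (((d - 1).choose (b : ℕ)) : ℝ) * (1 - s) ^ (d - 1 - (b : ℕ)) * s ^ (b : ℕ) * w b) ∧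
      (∑ b : Fin d,
            (((d - 1).choose (b : ℕ)) : ℝ) * (1 - s) ^ (d - 1 - (b : ℕ)) * s ^ (b : ℕ) * R b)
          / (∑ b : Fin d,
            (((d - 1).choose (b : ℕ)) : ℝ) * (1 - s) ^ (d - 1 - (b : ℕ)) * s ^ (b : ℕ) * w b)
        ≤ vhi := by
  intro s hs
  obtain ⟨hs0, hs1⟩ := hs
  set c : Fin d → ℝ := fun b =>
    (((d - 1).choose (b : ℕ)) : ℝ) * (1 - s) ^ (d - 1 - (b : ℕ)) * s ^ (b : ℕ) with hc
  have hcnn : ∀ b, 0 ≤ c b := fun b => by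
    apply mul_nonneg (mul_nonneg (Nat.cast_nonneg _) (pow_nonneg (by linarith) _))
      (pow_nonneg hs0 _)
  have hWpos : 0 < ∑ b : Fin d, c b * w b := by
    apply Finset.sum_pos' (fun b _ => mul_nonneg (hcnn b) (hw b).le
    )
    rcases lt_or_eq_of_le hs1 with h1 | h1
    · refine ⟨⟨0, hd⟩, Finset.mem_univ _, ?_⟩
      have : c ⟨0, hd⟩ = (1 - s) ^ (d - 1) := by
        simp [hc]
      rw [this]
      exact mul_pos (pow_pos (by linarith) _) (hw _)
    · refine ⟨⟨d - 1, Nat.sub_lt hd one_pos⟩, Finset.mem_univ _, ?_⟩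
      have : c ⟨d - 1, Nat.sub_lt hd one_pos⟩ = s ^ (d - 1) := by
        simp [hc, Nat.choose_self]
      rw [this, h1, one_pow, one_mul]
      exact hw _
  have hlo : vlo * (∑ b : Fin d, c b * w b) ≤ ∑ b : Fin d, c b * R b := by
    rw [Finset.mul_sum]
    apply Finset.sum_le_sum
    intro b _
    calc vlo * (c b * w b) = c b * (vlo * w b) := by ring
      _ ≤ c b * R b := mul_le_mul_of_nonneg_left (hcons b).1 (hcnn b)
  have hhi : (∑ b : Fin d, c b * R b) ≤ vhi * (∑ b : Fin d, c b * w b) := by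
    rw [Finset.mul_sum]
    apply Finset.sum_le_sum
    intro b _
    calc c b * R b ≤ c b * (vhi * w b) := mul_le_mul_of_nonneg_left (hcons b).2 (hcnn b)
      _ = vhi * (c b * w b) := by ring
  refine ⟨hWpos, hlo, hhi, ?_, ?_⟩
  · rw [le_div_iff₀ hWpos]; exact hlo
  · rw [div_le_iff₀ hWpos]; exact hhi
end

section
/- (C¹ continuity across a segment junction.) Let E be a real normed vector space and let r₁, r₂ : ℝ → E and h₁, h₂ : ℝ → ℝ be continuously differentiable on [0,1] with h₁'(s) > 0 and h₂'(s) > 0 for all s ∈ [0,1]. Assume the junction conditions r₁(1) = r₂(0), h₁(1) = h₂(0), r₁'(1) = r₂'(0), and h₁'(1) = h₂'(0). Define the concatenated trajectory x on [h₁ 0, h₂ 1] by x(t) = r₁((h₁ restricted to [0,1])⁻¹ t) for t ≤ h₁(1) and x(t) = r₂((h₂ restricted to [0,1])⁻¹ t) for t > h₁(1). Then x is differentiable at the junction time t* := h₁(1) (within [h₁ 0, h₂ 1]) with derivative (h₁'(1))⁻¹ • r₁'(1); in particular position and velocity are continuous across the junction. -/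
open Set Classical

variable {E : Type*} [NormedAddCommGroup E] [NormedSpace ℝ E]

section Helper
open Filter Function Topology

variable {E : Type*} [NormedAddCommGroup E] [NormedSpace ℝ E]

private lemma deriv_comp_invFunOn (f : ℝ → E) (h : ℝ → ℝ) (f' : E) (h' : ℝ) (s₀ : ℝ)
    (hs₀ : s₀ ∈ Icc (0:ℝ) 1)
    (hmono : StrictMonoOn h (Icc (0:ℝ) 1))
    (hsurj : SurjOn h (Icc (0:ℝ) 1) (Icc (h 0) (h 1)))
    (hf : HasDerivWithinAt f f' (Icc (0:ℝ) 1) s₀)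
    (hh : HasDerivWithinAt h h' (Icc (0:ℝ) 1) s₀)
    (hh' : h' ≠ 0)
    (hσ : Tendsto (Function.invFunOn h (Icc (0:ℝ) 1)) (𝓝[Icc (h 0) (h 1)] (h s₀)) (𝓝 s₀)) :
    HasDerivWithinAt (fun t => f (Function.invFunOn h (Icc (0:ℝ) 1) t)) (h'⁻¹ • f')
      (Icc (h 0) (h 1)) (h s₀) := by
  set σ := Function.invFunOn h (Icc (0:ℝ) 1) with hσdef
  have hinj : InjOn h (Icc (0:ℝ) 1) := hmono.injOn
  have hσmem : ∀ t ∈ Icc (h 0) (h 1), σ t ∈ Icc (0:ℝ) 1 := fun t ht =>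
    Function.invFunOn_mem (hsurj ht)
  have hσright : ∀ t ∈ Icc (h 0) (h 1), h (σ t) = t := fun t ht =>
    Function.invFunOn_eq (hsurj ht)
  have hσs₀ : σ (h s₀) = s₀ := hinj.leftInvOn_invFunOn hs₀
  rw [hasDerivWithinAt_iff_tendsto_slope]
  have hfs := hasDerivWithinAt_iff_tendsto_slope.1 hf
  have hhs := hasDerivWithinAt_iff_tendsto_slope.1 hh
  have hG : Tendsto (fun u => (slope h s₀ u)⁻¹ • slope f s₀ u)
      (𝓝[Icc (0:ℝ) 1 \ {s₀}] s₀) (𝓝 (h'⁻¹ • f')) := (hhs.inv₀ hh').smul hfs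
  have hσ' : Tendsto σ (𝓝[Icc (h 0) (h 1) \ {h s₀}] (h s₀)) (𝓝[Icc (0:ℝ) 1 \ {s₀}] s₀) := by
    rw [tendsto_nhdsWithin_iff]
    refine ⟨hσ.mono_left (nhdsWithin_mono _ diff_subset), ?_⟩
    filter_upwards [self_mem_nhdsWithin] with t ht
    refine ⟨hσmem t ht.1, fun hc => ht.2 ?_⟩
    simp only [mem_singleton_iff] at hc ⊢
    rw [← hσright t ht.1, hc]
  refine (hG.comp hσ').congr' ?_
  filter_upwards [self_mem_nhdsWithin] with t ht
  have hu : σ t - s₀ ≠ 0 := by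
    refine sub_ne_zero.2 fun hc => ht.2 ?_
    simp only [mem_singleton_iff]
    rw [← hσright t ht.1, hc]
  simp only [Function.comp_apply, slope, vsub_eq_sub, hσright t ht.1, hσs₀, smul_smul]
  congr 1
  field_simp
  rw [smul_eq_mul]
  field_simp

private lemma segment_setup (h : ℝ → ℝ) (h' : ℝ → ℝ)
    (hh : ∀ s ∈ Set.Icc (0 : ℝ) 1, HasDerivWithinAt h (h' s) (Set.Icc (0 : ℝ) 1) s)
    (hpos : ∀ s ∈ Set.Icc (0 : ℝ) 1, 0 < h' s) :
    StrictMonoOn h (Icc (0:ℝ) 1) ∧ SurjOn h (Icc (0:ℝ) 1) (Icc (h 0) (h 1)) ∧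
      StrictMonoOn (Function.invFunOn h (Icc (0:ℝ) 1)) (Icc (h 0) (h 1)) := by
  have hcont : ContinuousOn h (Icc (0:ℝ) 1) := fun s hs => (hh s hs).continuousWithinAt
  have hmono : StrictMonoOn h (Icc (0:ℝ) 1) :=
    strictMonoOn_of_hasDerivWithinAt_pos (convex_Icc 0 1) hcont
      (fun x hx => (hh x (interior_subset hx)).mono interior_subset)
      (fun x hx => hpos x (interior_subset hx))
  have hsurj : SurjOn h (Icc (0:ℝ) 1) (Icc (h 0) (h 1)) :=
    fun y hy => intermediate_value_Icc zero_le_one hcont hy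
  refine ⟨hmono, hsurj, ?_⟩
  intro t ht t' ht' htt'
  set σ := Function.invFunOn h (Icc (0:ℝ) 1)
  have m : σ t ∈ Icc (0:ℝ) 1 := Function.invFunOn_mem (hsurj ht)
  have m' : σ t' ∈ Icc (0:ℝ) 1 := Function.invFunOn_mem (hsurj ht')
  have e : h (σ t) = t := Function.invFunOn_eq (hsurj ht)
  have e' : h (σ t') = t' := Function.invFunOn_eq (hsurj ht')
  by_contra hle
  push_neg at hle
  have := hmono.monotoneOn m' m hle
  rw [e, e'] at this
  exact absurd this (not_le.2 htt')
end Helper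

open Filter Function Topology

/-- C¹ continuity across a segment junction: if two Bézier-parameterized
segments `(r₁, h₁)` and `(r₂, h₂)` are continuously differentiable on `[0,1]` with
positive temporal derivatives, and their endpoint positions, times, and derivatives match
at the junction, then the concatenated trajectory is differentiable at the junction time
`t* = h₁ 1` (within `[h₁ 0, h₂ 1]`) with derivative `(h₁' 1)⁻¹ • r₁' 1`; in particular
position and velocity are continuous across the junction. -/
theorem concatenated_trajectory_C1_at_junction
    (r₁ r₂ : ℝ → E) (h₁ h₂ : ℝ → ℝ) (r₁' r₂' : ℝ → E) (h₁' h₂' : ℝ → ℝ)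
    (hr₁ : ∀ s ∈ Set.Icc (0 : ℝ) 1, HasDerivWithinAt r₁ (r₁' s) (Set.Icc (0 : ℝ) 1) s)
    (hr₁c : ContinuousOn r₁' (Set.Icc (0 : ℝ) 1))
    (hr₂ : ∀ s ∈ Set.Icc (0 : ℝ) 1, HasDerivWithinAt r₂ (r₂' s) (Set.Icc (0 : ℝ) 1) s)
    (hr₂c : ContinuousOn r₂' (Set.Icc (0 : ℝ) 1))
    (hh₁ : ∀ s ∈ Set.Icc (0 : ℝ) 1, HasDerivWithinAt h₁ (h₁' s) (Set.Icc (0 : ℝ) 1) s)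
    (hh₁c : ContinuousOn h₁' (Set.Icc (0 : ℝ) 1))
    (hh₂ : ∀ s ∈ Set.Icc (0 : ℝ) 1, HasDerivWithinAt h₂ (h₂' s) (Set.Icc (0 : ℝ) 1) s)
    (hh₂c : ContinuousOn h₂' (Set.Icc (0 : ℝ) 1))
    (hpos₁ : ∀ s ∈ Set.Icc (0 : ℝ) 1, 0 < h₁' s)
    (hpos₂ : ∀ s ∈ Set.Icc (0 : ℝ) 1, 0 < h₂' s)
    (hjr : r₁ 1 = r₂ 0) (hjh : h₁ 1 = h₂ 0)
    (hjr' : r₁' 1 = r₂' 0) (hjh' : h₁' 1 = h₂' 0) :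
    HasDerivWithinAt
      (fun t => if t ≤ h₁ 1 then r₁ (Function.invFunOn h₁ (Set.Icc (0 : ℝ) 1) t)
                else r₂ (Function.invFunOn h₂ (Set.Icc (0 : ℝ) 1) t))
      ((h₁' 1)⁻¹ • r₁' 1) (Set.Icc (h₁ 0) (h₂ 1)) (h₁ 1) := by
  have h0I : (0:ℝ) ∈ Icc (0:ℝ) 1 := ⟨le_refl 0, zero_le_one⟩
  have h1I : (1:ℝ) ∈ Icc (0:ℝ) 1 := ⟨zero_le_one, le_refl 1⟩
  obtain ⟨hmono₁, hsurj₁, hσmono₁⟩ := segment_setup h₁ h₁' hh₁ hpos₁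
  obtain ⟨hmono₂, hsurj₂, hσmono₂⟩ := segment_setup h₂ h₂' hh₂ hpos₂
  set σ₁ := Function.invFunOn h₁ (Icc (0:ℝ) 1) with hσ₁def
  set σ₂ := Function.invFunOn h₂ (Icc (0:ℝ) 1) with hσ₂def
  have hlt₁ : h₁ 0 < h₁ 1 := hmono₁ h0I h1I zero_lt_one
  have hlt₂ : h₂ 0 < h₂ 1 := hmono₂ h0I h1I zero_lt_one
  have hσ₁1 : σ₁ (h₁ 1) = 1 := hmono₁.injOn.leftInvOn_invFunOn h1I
  have hσ₂0 : σ₂ (h₂ 0) = 0 := hmono₂.injOn.leftInvOn_invFunOn h0I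
  -- continuity of σ₁ at h₁ 1 from the left
  have hσc₁ : Tendsto σ₁ (𝓝[Icc (h₁ 0) (h₁ 1)] (h₁ 1)) (𝓝 1) := by
    have hc : ContinuousWithinAt σ₁ (Iic (h₁ 1)) (h₁ 1) := by
      refine hσmono₁.continuousWithinAt_left_of_exists_between
        (Icc_mem_nhdsLE hlt₁) ?_
      intro b hb
      rw [hσ₁1] at hb
      have hmax : max b 0 ∈ Icc (0:ℝ) 1 := ⟨le_max_right _ _, max_le hb.le zero_le_one⟩
      refine ⟨h₁ (max b 0), ?_, ?_⟩
      · exact ⟨hmono₁.monotoneOn h0I hmax hmax.1, hmono₁.monotoneOn hmax h1I hmax.2⟩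
      · have e : σ₁ (h₁ (max b 0)) = max b 0 := hmono₁.injOn.leftInvOn_invFunOn hmax
        rw [hσ₁1, e]
        exact ⟨le_max_left _ _, max_lt hb zero_lt_one⟩
    have := (hc.mono (Icc_subset_Iic_self (a := h₁ 0))).tendsto
    rwa [hσ₁1] at this
  -- continuity of σ₂ at h₂ 0 from the right
  have hσc₂ : Tendsto σ₂ (𝓝[Icc (h₂ 0) (h₂ 1)] (h₂ 0)) (𝓝 0) := by
    have hc : ContinuousWithinAt σ₂ (Ici (h₂ 0)) (h₂ 0) := by
      refine hσmono₂.continuousWithinAt_right_of_exists_between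
        (Icc_mem_nhdsGE hlt₂) ?_
      intro b hb
      rw [hσ₂0] at hb
      have hmin : min b 1 ∈ Icc (0:ℝ) 1 := ⟨le_min hb.le zero_le_one, min_le_right _ _⟩
      refine ⟨h₂ (min b 1), ?_, ?_⟩
      · exact ⟨hmono₂.monotoneOn h0I hmin hmin.1, hmono₂.monotoneOn hmin h1I hmin.2⟩
      · have e : σ₂ (h₂ (min b 1)) = min b 1 := hmono₂.injOn.leftInvOn_invFunOn hmin
        rw [hσ₂0, e]
        exact ⟨lt_min hb zero_lt_one, min_le_left _ _⟩
    have := (hc.mono (Icc_subset_Ici_self : Icc (h₂ 0) (h₂ 1) ⊆ _)).tendsto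
    rwa [hσ₂0] at this
  -- derivative of the left piece
  have left := deriv_comp_invFunOn r₁ h₁ (r₁' 1) (h₁' 1) 1 h1I hmono₁ hsurj₁
    (hr₁ 1 h1I) (hh₁ 1 h1I) (hpos₁ 1 h1I).ne' hσc₁
  have right := deriv_comp_invFunOn r₂ h₂ (r₂' 0) (h₂' 0) 0 h0I hmono₂ hsurj₂
    (hr₂ 0 h0I) (hh₂ 0 h0I) (hpos₂ 0 h0I).ne' hσc₂
  set x : ℝ → E := fun t => if t ≤ h₁ 1 then r₁ (σ₁ t) else r₂ (σ₂ t) with hxdef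
  have hx1 : x (h₁ 1) = r₁ 1 := by
    simp only [hxdef, if_pos (le_refl (h₁ 1)), hσ₁1]
  have leftx : HasDerivWithinAt x ((h₁' 1)⁻¹ • r₁' 1) (Icc (h₁ 0) (h₁ 1)) (h₁ 1) := by
    refine left.congr (fun t ht => ?_) ?_
    · simp only [hxdef, if_pos ht.2, hσ₁def]
    · simp only [hxdef, if_pos (le_refl (h₁ 1)), hσ₁def]
  have rightF : HasDerivWithinAt (fun t => r₂ (σ₂ t)) ((h₁' 1)⁻¹ • r₁' 1)
      (Icc (h₁ 1) (h₂ 1)) (h₁ 1) := by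
    rw [hjh', hjr', hjh]; exact right
  have rightx : HasDerivWithinAt x ((h₁' 1)⁻¹ • r₁' 1) (Icc (h₁ 1) (h₂ 1)) (h₁ 1) := by
    have hkey : x (h₁ 1) = r₂ (σ₂ (h₁ 1)) := by
      rw [hx1, hjr, hjh, hσ₂0]
    refine rightF.congr (fun t ht => ?_) hkey
    by_cases hle : t ≤ h₁ 1
    · have htEq : t = h₁ 1 := le_antisymm hle ht.1
      rw [htEq]; exact hkey
    · simp only [hxdef, if_neg hle]
  have hcomb := leftx.union rightx
  rwa [Icc_union_Icc_eq_Icc hlt₁.le (hjh ▸ hlt₂.le)] at hcomb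
end
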